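/- arXiv:2602.11854 — 4 statements merged into one kernel-verified Lean document; each statement's English description precedes it below -/
import Mathlib

section
/- Let n be a positive integer, let X ⊆ {0,1}^n be nonempty, let c ∈ ℝ^n, let d ∈ ℝ^n with d_1 ≥ d_2 ≥ … ≥ d_n ≥ 0, set d_{n+1} = 0, and let Γ be an integer with 0 ≤ Γ ≤ n. Then min over x ∈ X of [ Σ_{i=1}^n c_i x_i + max{ Σ_{j∈S} d_j x_j : S ⊆ {1,…,n}, |S| ≤ Γ } ] equals min over ℓ ∈ {1,…,n+1} of [ Γ d_ℓ + min over x ∈ X of ( Σ_{i=1}^n c_i x_i + Σ_{j=1}^{ℓ} (d_j − d_ℓ) x_j ) ]. -/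
/-!
Fix a binary `x` and a threshold `l`. A term `d j * x j` chosen by the adversary is at most
`d l` if `j > l` (as `d` is nonincreasing) and at most `d l + (d j - d l) * x j` if `j ≤ l`, so
any choice of at most `Γ` terms is bounded by `Γ * d l + ∑_{j ≤ l} (d j - d l) * x j`. The bound
is attained: take for `l` the index just past the first `Γ` active coordinates of `x` (or
`l = n + 1` if there are fewer), and let the adversary pick exactly those coordinates. Hence the
worst case is a minimum over `l`, and the two minima over `x` and over `l` can be swapped.
-/

open Finset

theorem Nat.exists_eq_of_map_succ_le_succ {f : ℕ → ℕ} (hf : ∀ k, f (k + 1) ≤ f k + 1)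
    {a b m : ℕ} (hab : a ≤ b) (ha : f a ≤ m) (hb : m ≤ f b) : ∃ k ∈ Set.Icc a b, f k = m := by
  induction b, hab using Nat.le_induction with
  | base => exact ⟨a, ⟨le_rfl, le_rfl⟩, le_antisymm ha hb⟩
  | succ b hab ih =>
    by_cases h : m ≤ f b
    · obtain ⟨k, hk, hfk⟩ := ih h
      exact ⟨k, ⟨hk.1, hk.2.trans b.le_succ⟩, hfk⟩
    · exact ⟨b + 1, ⟨by omega, le_rfl⟩, by have := hf b; omega⟩

theorem csInf_add_isGreatest_eq_csInf_add_csInf {α ι : Type*} {X : Set α} {L : Set ι}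
    (hX : X.Nonempty) (hL : L.Finite) {D : α → Set ℝ} {C : α → ℝ} {a : ι → ℝ}
    {G : ι → α → ℝ} (hG : ∀ l ∈ L, BddBelow {w | ∃ x ∈ X, w = G l x})
    (hle : ∀ x ∈ X, ∀ l ∈ L, ∀ w ∈ D x, C x + w ≤ a l + G l x)
    (hex : ∀ x ∈ X, ∃ l ∈ L, ∃ w ∈ D x, C x + w = a l + G l x) :
    sInf {v | ∃ x ∈ X, ∃ w, IsGreatest (D x) w ∧ v = C x + w} =
      sInf {v | ∃ l ∈ L, v = a l + sInf {w | ∃ x ∈ X, w = G l x}} := by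
  set A := {v | ∃ x ∈ X, ∃ w, IsGreatest (D x) w ∧ v = C x + w}
  set B := {v | ∃ l ∈ L, v = a l + sInf {w | ∃ x ∈ X, w = G l x}}
  have hmax : ∀ x ∈ X, ∃ l ∈ L, ∃ w, IsGreatest (D x) w ∧ C x + w = a l + G l x := by
    intro x hx
    obtain ⟨l, hl, w, hw, hwl⟩ := hex x hx
    exact ⟨l, hl, w, ⟨hw, fun w' hw' => by linarith [hle x hx l hl w' hw']⟩, hwl⟩
  have hB : BddBelow B :=
    ((hL.image fun l => a l + sInf {w | ∃ x ∈ X, w = G l x}).subset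
      (by rintro _ ⟨l, hl, rfl⟩; exact ⟨l, hl, rfl⟩)).bddBelow
  have hB_le : ∀ l ∈ L, ∀ x ∈ X, sInf B ≤ a l + G l x := fun l hl x hx =>
    (csInf_le hB ⟨l, hl, rfl⟩).trans (add_le_add_right (csInf_le (hG l hl) ⟨x, hx, rfl⟩) _)
  have hA_lower : sInf B ∈ lowerBounds A := by
    rintro _ ⟨x, hx, w, hw, rfl⟩
    obtain ⟨l, hl, w₀, hw₀, hw₀l⟩ := hmax x hx
    rw [hw.unique hw₀, hw₀l]
    exact hB_le l hl x hx
  obtain ⟨x₀, hx₀⟩ := hX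
  obtain ⟨l₀, hl₀, w₀, hw₀, -⟩ := hmax x₀ hx₀
  refine le_antisymm ?_ (le_csInf ⟨_, x₀, hx₀, w₀, hw₀, rfl⟩ hA_lower)
  refine le_csInf ⟨_, l₀, hl₀, rfl⟩ ?_
  rintro _ ⟨l, hl, rfl⟩
  rw [← sub_le_iff_le_add']
  refine le_csInf ⟨_, x₀, hx₀, rfl⟩ ?_
  rintro _ ⟨x, hx, rfl⟩
  obtain ⟨-, -, w, hw, -⟩ := hmax x hx
  have := csInf_le ⟨_, hA_lower⟩ ⟨x, hx, w, hw, rfl⟩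
  linarith [hle x hx l hl w hw.1]

theorem neg_sum_abs_le_sum_mul {s : Finset ℕ} {x : ℕ → ℝ} (hx : ∀ i ∈ s, x i = 0 ∨ x i = 1)
    (a : ℕ → ℝ) : -∑ i ∈ s, |a i| ≤ ∑ i ∈ s, a i * x i := by
  rw [← sum_neg_distrib]
  refine sum_le_sum fun i hi => ?_
  rcases hx i hi with h | h <;> simp [h, neg_abs_le]

section BudgetedUncertainty

variable {n Γ : ℕ} {d x : ℕ → ℝ}

noncomputable def activeBelow (n : ℕ) (x : ℕ → ℝ) (l : ℕ) : Finset ℕ :=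
  {j ∈ Icc 1 n | x j = 1 ∧ j < l}

theorem card_activeBelow_succ_le (l : ℕ) :
    #(activeBelow n x (l + 1)) ≤ #(activeBelow n x l) + 1 := by
  refine (card_le_card fun j hj => ?_).trans (card_insert_le l _)
  simp only [activeBelow, mem_filter, mem_insert] at hj ⊢
  rcases Nat.lt_succ_iff_lt_or_eq.1 hj.2.2 with h | h
  · exact Or.inr ⟨hj.1, hj.2.1, h⟩
  · exact Or.inl h

theorem sum_Icc_min_sub_mul_eq_sum_activeBelow (hx : ∀ i ∈ Icc 1 n, x i = 0 ∨ x i = 1)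
    {l : ℕ} (hl : l ≤ n + 1) :
    ∑ j ∈ Icc 1 (min l n), (d j - d l) * x j = ∑ j ∈ activeBelow n x l, (d j - d l) := by
  have hsub : activeBelow n x l ⊆ Icc 1 (min l n) := fun j hj => by
    simp only [activeBelow, mem_filter, mem_Icc] at hj ⊢
    omega
  rw [← sum_subset hsub fun j hj hjl => ?_]
  · refine sum_congr rfl fun j hj => ?_
    rw [(mem_filter.1 hj).2.1, mul_one]
  · simp only [activeBelow, mem_filter, mem_Icc, not_and] at hj hjl
    rcases hx j (mem_Icc.2 ⟨hj.1, hj.2.trans (min_le_right _ _)⟩) with h | h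
    · rw [h, mul_zero]
    · rw [show j = l by have := hjl ⟨hj.1, by omega⟩ h; omega, sub_self, zero_mul]

theorem sum_mul_le_budget_bound (hd : AntitoneOn d (Set.Icc 1 (n + 1)))
    (hx : ∀ i ∈ Icc 1 n, x i = 0 ∨ x i = 1) {l : ℕ} (hl : l ∈ Icc 1 (n + 1)) (hdl : 0 ≤ d l)
    {S : Finset ℕ} (hS : S ⊆ Icc 1 n) (hSΓ : #S ≤ Γ) :
    ∑ j ∈ S, d j * x j ≤ Γ * d l + ∑ j ∈ Icc 1 (min l n), (d j - d l) * x j := by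
  set L := Icc 1 (min l n)
  obtain ⟨hl1, hln⟩ := mem_Icc.1 hl
  have hterm : ∀ j ∈ S, d j * x j ≤ d l + if j ∈ L then (d j - d l) * x j else 0 := by
    intro j hj
    obtain ⟨hj1, hjn⟩ := mem_Icc.1 (hS hj)
    split_ifs with hjL
    · rcases hx j (hS hj) with h | h <;> simp [h, hdl]
    · have hlj : l ≤ j := by simp only [L, mem_Icc] at hjL; omega
      have := hd ⟨hl1, hln⟩ ⟨hj1, by omega⟩ hlj
      rcases hx j (hS hj) with h | h <;> simp [h, hdl, this]
  have hexcess : ∀ j ∈ L, 0 ≤ (d j - d l) * x j := by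
    intro j hj
    obtain ⟨hj1, hjl⟩ := mem_Icc.1 hj
    have := hd ⟨hj1, by omega⟩ ⟨hl1, hln⟩ (hjl.trans (min_le_left _ _))
    rcases hx j (mem_Icc.2 ⟨hj1, hjl.trans (min_le_right _ _)⟩) with h | h <;> simp [h, this]
  calc ∑ j ∈ S, d j * x j
      ≤ ∑ j ∈ S, (d l + if j ∈ L then (d j - d l) * x j else 0) := sum_le_sum hterm
    _ = #S * d l + ∑ j ∈ S ∩ L, (d j - d l) * x j := by
      rw [sum_add_distrib, sum_const, nsmul_eq_mul, sum_ite_mem]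
    _ ≤ Γ * d l + ∑ j ∈ L, (d j - d l) * x j :=
      add_le_add (mul_le_mul_of_nonneg_right (by exact_mod_cast hSΓ) hdl)
        (sum_le_sum_of_subset_of_nonneg inter_subset_right fun j hj _ => hexcess j hj)

theorem exists_budget_sum_eq (hdend : d (n + 1) = 0) (hx : ∀ i ∈ Icc 1 n, x i = 0 ∨ x i = 1) :
    ∃ l ∈ Icc 1 (n + 1), ∃ S ⊆ Icc 1 n, #S ≤ Γ ∧
      ∑ j ∈ S, d j * x j = Γ * d l + ∑ j ∈ Icc 1 (min l n), (d j - d l) * x j := by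
  obtain ⟨l, hl, hcard, hslack⟩ : ∃ l ∈ Icc 1 (n + 1),
      #(activeBelow n x l) ≤ Γ ∧ (#(activeBelow n x l) = Γ ∨ d l = 0) := by
    by_cases hΓ : Γ ≤ #(activeBelow n x (n + 1))
    · have h1 : #(activeBelow n x 1) = 0 := by
        rw [card_eq_zero, activeBelow, filter_eq_empty_iff]
        intro j hj h
        have := (mem_Icc.1 hj).1
        omega
      obtain ⟨l, hl, hlΓ⟩ := Nat.exists_eq_of_map_succ_le_succ
        (f := fun l => #(activeBelow n x l)) (a := 1) card_activeBelow_succ_le (by omega)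
        (h1.trans_le Γ.zero_le) hΓ
      exact ⟨l, mem_Icc.2 hl, hlΓ.le, Or.inl hlΓ⟩
    · exact ⟨n + 1, mem_Icc.2 ⟨by omega, le_rfl⟩, by omega, Or.inr hdend⟩
  refine ⟨l, hl, activeBelow n x l, filter_subset _ _, hcard, ?_⟩
  have hxS : ∑ j ∈ activeBelow n x l, d j * x j = ∑ j ∈ activeBelow n x l, d j :=
    sum_congr rfl fun j hj => by rw [(mem_filter.1 hj).2.1, mul_one]
  rw [sum_Icc_min_sub_mul_eq_sum_activeBelow hx (mem_Icc.1 hl).2, sum_sub_distrib, sum_const,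
    nsmul_eq_mul, hxS]
  rcases hslack with h | h <;> rw [h] <;> ring

end BudgetedUncertainty

theorem stmt4_general (n : ℕ) (X : Set (ℕ → ℝ)) (hXne : X.Nonempty)
    (hXbin : ∀ x ∈ X, ∀ i ∈ Finset.Icc 1 n, x i = 0 ∨ x i = 1)
    (c d : ℕ → ℝ)
    (hsort : ∀ i j, 1 ≤ i → i ≤ j → j ≤ n + 1 → d j ≤ d i)
    (hdend : d (n + 1) = 0)
    (Γ : ℕ) :
    sInf {v : ℝ | ∃ x ∈ X, ∃ w : ℝ,
        IsGreatest {w' : ℝ | ∃ S : Finset ℕ, S ⊆ Finset.Icc 1 n ∧ S.card ≤ Γ ∧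
          w' = ∑ j ∈ S, d j * x j} w ∧
        v = (∑ i ∈ Finset.Icc 1 n, c i * x i) + w} =
      sInf {v : ℝ | ∃ l ∈ Finset.Icc 1 (n + 1),
        v = (Γ : ℝ) * d l +
          sInf {w : ℝ | ∃ x ∈ X,
            w = (∑ i ∈ Finset.Icc 1 n, c i * x i) +
              ∑ j ∈ Finset.Icc 1 (min l n), (d j - d l) * x j}} := by
  have hd : AntitoneOn d (Set.Icc 1 (n + 1)) := fun i hi j hj hij => hsort i j hi.1 hij hj.2
  refine csInf_add_isGreatest_eq_csInf_add_csInf (L := (Icc 1 (n + 1) : Set ℕ)) hXne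
    (Icc 1 (n + 1)).finite_toSet
    (fun l _ => ⟨-∑ i ∈ Icc 1 n, |c i| + -∑ j ∈ Icc 1 (min l n), |d j - d l|, ?_⟩) ?_ ?_
  · rintro _ ⟨x, hx, rfl⟩
    have hxl : ∀ i ∈ Icc 1 (min l n), x i = 0 ∨ x i = 1 := fun i hi =>
      hXbin x hx i (Icc_subset_Icc_right (min_le_right _ _) hi)
    exact add_le_add (neg_sum_abs_le_sum_mul (hXbin x hx) c) (neg_sum_abs_le_sum_mul hxl _)
  · rintro x hx l hl _ ⟨S, hS, hSΓ, rfl⟩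
    have hdl : 0 ≤ d l := hdend ▸ hd (mem_Icc.1 hl) ⟨by omega, le_rfl⟩ (mem_Icc.1 hl).2
    linarith [sum_mul_le_budget_bound hd (hXbin x hx) hl hdl hS hSΓ]
  · intro x hx
    obtain ⟨l, hl, S, hS, hSΓ, hSl⟩ := exists_budget_sum_eq hdend (hXbin x hx)
    exact ⟨l, hl, _, ⟨S, hS, hSΓ, rfl⟩, by rw [hSl]; ring⟩

/-- Bertsimas–Sim decomposition: a robust combinatorial optimization problem under a
discrete budgeted uncertainty set (with deviations `d_1 ≥ … ≥ d_n ≥ 0`, `d_{n+1} = 0`)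
decomposes into `n+1` nominal problems.  Indices run over `{1, …, n}`, and the binary
feasible set `X` consists of functions binary on `{1, …, n}`. -/
theorem stmt4 (n : ℕ) (hn : 0 < n) (X : Set (ℕ → ℝ)) (hXne : X.Nonempty)
    (hXbin : ∀ x ∈ X, ∀ i ∈ Finset.Icc 1 n, x i = 0 ∨ x i = 1)
    (c d : ℕ → ℝ)
    (hsort : ∀ i j, 1 ≤ i → i ≤ j → j ≤ n + 1 → d j ≤ d i)
    (hdnn : ∀ i, 1 ≤ i → i ≤ n → 0 ≤ d i)
    (hdend : d (n + 1) = 0)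
    (Γ : ℕ) (hΓ : Γ ≤ n) :
    sInf {v : ℝ | ∃ x ∈ X, ∃ w : ℝ,
        IsGreatest {w' : ℝ | ∃ S : Finset ℕ, S ⊆ Finset.Icc 1 n ∧ S.card ≤ Γ ∧
          w' = ∑ j ∈ S, d j * x j} w ∧
        v = (∑ i ∈ Finset.Icc 1 n, c i * x i) + w} =
      sInf {v : ℝ | ∃ l ∈ Finset.Icc 1 (n + 1),
        v = (Γ : ℝ) * d l +
          sInf {w : ℝ | ∃ x ∈ X,
            w = (∑ i ∈ Finset.Icc 1 n, c i * x i) +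
              ∑ j ∈ Finset.Icc 1 (min l n), (d j - d l) * x j}} :=
  stmt4_general n X hXne hXbin c d hsort hdend Γ
end

section
/- Let M be a finite simple graph on a vertex set V with |V| ≥ 3, let v ∈ V be a vertex of degree 1 with unique neighbor u, and let T ⊆ V be RLP-feasible for M. Then u ∈ T. -/
/-!
A third vertex `x ∉ {u, v}` is not adjacent to `v`, so feasibility gives a walk from `v` to `x`.
Its second vertex is a neighbour of `v`, hence `u`, and it is internal because `x ≠ u`.
-/

/-- `T ⊆ V` is RLP-feasible for the graph `G` if every pair of distinct nonadjacent
vertices is joined by a walk all of whose internal vertices belong to `T`. -/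
def RLPFeasible {V : Type*} (G : SimpleGraph V) (T : Set V) : Prop :=
  ∀ p q : V, p ≠ q → ¬ G.Adj p q →
    ∃ w : G.Walk p q, ∀ v ∈ w.support, v ≠ p → v ≠ q → v ∈ T

theorem Fintype.exists_ne_ne_of_two_lt_card {α : Type*} [Fintype α]
    (h : 2 < Fintype.card α) (a b : α) : ∃ c, c ≠ a ∧ c ≠ b := by
  classical
  have hlt : ({a, b} : Finset α).card < (Finset.univ : Finset α).card :=
    (Finset.card_le_two).trans_lt h
  obtain ⟨c, -, hc⟩ := Finset.exists_mem_notMem_of_card_lt_card hlt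
  simp only [Finset.mem_insert, Finset.mem_singleton, not_or] at hc
  exact ⟨c, hc⟩

theorem RLPFeasible.mem_of_forall_adj_eq {V : Type*} {G : SimpleGraph V} {T : Set V}
    (hT : RLPFeasible G T) {v u x : V} (huniq : ∀ y, G.Adj v y → y = u)
    (hxv : x ≠ v) (hxu : x ≠ u) : u ∈ T := by
  obtain ⟨w, hw⟩ := hT v x hxv.symm fun h ↦ hxu (huniq x h)
  have hw_not_nil : ¬w.Nil := w.not_nil_of_ne hxv.symm
  have hsnd_adj : G.Adj v w.snd := w.adj_snd hw_not_nil
  have hsnd : w.snd = u := huniq _ hsnd_adj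
  subst hsnd
  exact hw _ (List.mem_of_mem_tail (w.snd_mem_tail_support hw_not_nil)) hsnd_adj.ne' hxu.symm

theorem stmt9_general {V : Type*} [Fintype V] (G : SimpleGraph V)
    [DecidableRel G.Adj] (hcard : 3 ≤ Fintype.card V) (v u : V)
    (hdeg : G.degree v = 1) (hadj : G.Adj v u)
    (T : Set V) (hT : RLPFeasible G T) : u ∈ T := by
  obtain ⟨x, hxv, hxu⟩ := Fintype.exists_ne_ne_of_two_lt_card hcard v u
  obtain ⟨u', -, huniq'⟩ := G.degree_eq_one_iff_existsUnique_adj.mp hdeg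
  have huniq : ∀ y, G.Adj v y → y = u := fun y hy ↦ (huniq' y hy).trans (huniq' u hadj).symm
  exact hT.mem_of_forall_adj_eq huniq hxv hxu

/-- Correctness of the preprocessing step: if `v` has degree 1 with unique neighbor
`u` in a finite simple graph on at least 3 vertices, then every RLP-feasible set
contains `u`. -/
theorem stmt9 {V : Type*} [Fintype V] [DecidableEq V] (G : SimpleGraph V)
    [DecidableRel G.Adj] (hcard : 3 ≤ Fintype.card V) (v u : V)
    (hdeg : G.degree v = 1) (hadj : G.Adj v u)
    (T : Set V) (hT : RLPFeasible G T) : u ∈ T :=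
  stmt9_general G hcard v u hdeg hadj T hT
end

section
/- Let M be a finite simple graph on a vertex set V and let T ⊆ V be a connected dominating set of M. Then T is RLP-feasible for M: for every pair of distinct vertices p, q that are not adjacent in M there exists a walk from p to q in M all of whose internal vertices belong to T. -/
/-- `T ⊆ V` is a connected dominating set of `G` if `T` is nonempty, every vertex
outside `T` is adjacent to some vertex of `T`, and the subgraph induced by `T` is
connected. -/
def ConnDomSet {V : Type*} (G : SimpleGraph V) (T : Set V) : Prop :=
  T.Nonempty ∧ (∀ v ∉ T, ∃ u ∈ T, G.Adj v u) ∧ (G.induce T).Connected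

/-!
Adding one vertex to a connected dominating set gives again a connected dominating set, because
the new vertex is adjacent to the old set. So `T ∪ {p, q}` induces a connected subgraph, and a walk
from `p` to `q` inside it has all its internal vertices in `T`.
-/

namespace SimpleGraph

variable {V : Type*} {G : SimpleGraph V} {T : Set V}

lemma Preconnected.exists_walk_support_subset_of_induce {S : Set V}
    (hS : (G.induce S).Preconnected) {p q : V} (hp : p ∈ S) (hq : q ∈ S) :
    ∃ w : G.Walk p q, ∀ v ∈ w.support, v ∈ S := by
  obtain ⟨w⟩ := hS ⟨p, hp⟩ ⟨q, hq⟩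
  refine ⟨w.map (Embedding.induce S).toHom, fun v hv => ?_⟩
  obtain ⟨x, -, rfl⟩ := List.mem_map.mp (Walk.support_map (Embedding.induce S).toHom w ▸ hv :)
  exact x.2

lemma induce_insert_connected_of_adj {p u : V} (hT : (G.induce T).Preconnected) (hu : u ∈ T)
    (hpu : G.Adj p u) : (G.induce (insert p T)).Connected :=
  connected_induce_union (s := {p}) Preconnected.of_subsingleton hT rfl hu hpu

end SimpleGraph

open SimpleGraph

theorem ConnDomSet.insert {V : Type*} {G : SimpleGraph V} {T : Set V} (hT : ConnDomSet G T)
    (p : V) : ConnDomSet G (insert p T) := by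
  by_cases hp : p ∈ T
  · rwa [Set.insert_eq_of_mem hp]
  obtain ⟨-, hdom, hconn⟩ := hT
  obtain ⟨u, hu, hpu⟩ := hdom p hp
  refine ⟨Set.insert_nonempty p T, fun v hv => ?_,
    induce_insert_connected_of_adj hconn.preconnected hu hpu⟩
  obtain ⟨w, hw, hvw⟩ := hdom v (fun h => hv (Set.mem_insert_of_mem p h))
  exact ⟨w, Set.mem_insert_of_mem p hw, hvw⟩

theorem stmt11_general {V : Type*} (G : SimpleGraph V) (T : Set V)
    (hT : ConnDomSet G T) : RLPFeasible G T := by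
  intro p q _ _
  obtain ⟨-, -, hconn⟩ := (hT.insert p).insert q
  obtain ⟨w, hw⟩ := hconn.preconnected.exists_walk_support_subset_of_induce
    (Set.mem_insert_of_mem q (Set.mem_insert p T)) (Set.mem_insert q _)
  refine ⟨w, fun v hv hvp hvq => ?_⟩
  simpa [hvp, hvq] using hw v hv

/-- Every connected dominating set of a finite simple graph is RLP-feasible. -/
theorem stmt11 {V : Type*} [Fintype V] (G : SimpleGraph V) (T : Set V)
    (hT : ConnDomSet G T) : RLPFeasible G T :=
  stmt11_general G T hT
end

section
/- Let M be a finite connected simple graph on a vertex set V that is not complete (i.e., there exist two distinct nonadjacent vertices). Then the minimum cardinality of an RLP-feasible subset of V equals the minimum cardinality of a connected dominating set of M. -/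
open SimpleGraph

section

variable {V : Type*} {G : SimpleGraph V} {T : Set V}

lemma exists_walk_into_of_dominating (hdom : ∀ v ∉ T, ∃ u ∈ T, G.Adj v u) (x : V) :
    ∃ u ∈ T, ∃ w : G.Walk x u, ∀ v ∈ w.support, v ≠ x → v ∈ T := by
  by_cases hx : x ∈ T
  · exact ⟨x, hx, .nil, by simp⟩
  · obtain ⟨u, hu, hxu⟩ := hdom x hx
    refine ⟨u, hu, hxu.toWalk, fun v hv hvx => ?_⟩
    rcases List.mem_pair.mp (by simpa using hv) with rfl | rfl
    · exact absurd rfl hvx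
    · exact hu

lemma SimpleGraph.Preconnected.exists_walk_support_subset (h : (G.induce T).Preconnected)
    {a b : V} (ha : a ∈ T) (hb : b ∈ T) : ∃ w : G.Walk a b, ∀ v ∈ w.support, v ∈ T := by
  obtain ⟨w⟩ := h ⟨a, ha⟩ ⟨b, hb⟩
  refine ⟨w.map (Embedding.induce T).toHom, fun v hv => ?_⟩
  obtain ⟨⟨v, hvT⟩, -, rfl⟩ := List.mem_map.mp (w.support_map _ ▸ hv)
  exact hvT

lemma ConnDomSet.rlpFeasible (hT : ConnDomSet G T) : RLPFeasible G T := by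
  obtain ⟨-, hdom, hconn⟩ := hT
  intro p q _ _
  obtain ⟨u, hu, wp, hwp⟩ := exists_walk_into_of_dominating hdom p
  obtain ⟨u', hu', wq, hwq⟩ := exists_walk_into_of_dominating hdom q
  obtain ⟨wT, hwT⟩ := hconn.preconnected.exists_walk_support_subset hu hu'
  refine ⟨wp.append (wT.append wq.reverse), fun v hv hvp hvq => ?_⟩
  simp only [Walk.mem_support_append_iff, Walk.support_reverse, List.mem_reverse] at hv
  rcases hv with hv | hv | hv
  · exact hwp v hv hvp
  · exact hwT v hv
  · exact hwq v hv hvq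

lemma RLPFeasible.exists_adj_mem (hT : RLPFeasible G T) {v u : V} (hvu : v ≠ u)
    (hnadj : ¬ G.Adj v u) : ∃ x ∈ T, G.Adj v x := by
  obtain ⟨w, hw⟩ := hT v u hvu hnadj
  cases w with
  | nil => exact absurd rfl hvu
  | @cons _ x _ hvx w =>
    have hxu : x ≠ u := by
      rintro rfl
      exact hnadj hvx
    exact ⟨x, hw x (by simp) hvx.ne' hxu, hvx⟩

lemma RLPFeasible.preconnected_induce (hT : RLPFeasible G T) : (G.induce T).Preconnected := by
  rintro ⟨a, ha⟩ ⟨b, hb⟩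
  by_cases hab : a = b
  · subst hab
    rfl
  by_cases hadj : G.Adj a b
  · exact Adj.reachable (show (G.induce T).Adj ⟨a, ha⟩ ⟨b, hb⟩ from hadj)
  obtain ⟨w, hw⟩ := hT a b hab hadj
  have hwT : ∀ v ∈ w.support, v ∈ T := fun v hv => by
    by_cases hva : v = a
    · exact hva ▸ ha
    by_cases hvb : v = b
    · exact hvb ▸ hb
    exact hw v hv hva hvb
  exact (w.induce T hwT).reachable

lemma RLPFeasible.connDomSet (hncomplete : ∃ p q : V, p ≠ q ∧ ¬ G.Adj p q)
    (hT : RLPFeasible G T) : ConnDomSet G T := by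
  obtain ⟨p, q, hpq, hnadj⟩ := hncomplete
  obtain ⟨t, ht, -⟩ := hT.exists_adj_mem hpq hnadj
  have : Nonempty T := ⟨⟨t, ht⟩⟩
  refine ⟨⟨t, ht⟩, fun v hv => ?_, ⟨hT.preconnected_induce⟩⟩
  by_cases hfar : ∃ u, v ≠ u ∧ ¬ G.Adj v u
  · obtain ⟨u, hvu, hvu'⟩ := hfar
    exact hT.exists_adj_mem hvu hvu'
  · push Not at hfar
    exact ⟨t, ht, hfar t (ne_of_mem_of_not_mem ht hv).symm⟩

lemma rlpFeasible_iff_connDomSet (hncomplete : ∃ p q : V, p ≠ q ∧ ¬ G.Adj p q) :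
    RLPFeasible G T ↔ ConnDomSet G T :=
  ⟨RLPFeasible.connDomSet hncomplete, ConnDomSet.rlpFeasible⟩

end

theorem stmt12_general {V : Type*} (G : SimpleGraph V)
    (hncomplete : ∃ p q : V, p ≠ q ∧ ¬ G.Adj p q) :
    sInf {k : ℕ | ∃ T : Set V, RLPFeasible G T ∧ T.ncard = k} =
      sInf {k : ℕ | ∃ T : Set V, ConnDomSet G T ∧ T.ncard = k} := by
  simp_rw [rlpFeasible_iff_connDomSet hncomplete]

/-- For a finite connected simple graph that is not complete, the minimum cardinality
of an RLP-feasible set equals the minimum cardinality of a connected dominating set. -/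
theorem stmt12 {V : Type*} [Fintype V] (G : SimpleGraph V) (hconn : G.Connected)
    (hncomplete : ∃ p q : V, p ≠ q ∧ ¬ G.Adj p q) :
    sInf {k : ℕ | ∃ T : Set V, RLPFeasible G T ∧ T.ncard = k} =
      sInf {k : ℕ | ∃ T : Set V, ConnDomSet G T ∧ T.ncard = k} :=
  stmt12_general G hncomplete
end
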